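/- Suppose there exist P ≻ 0, Y, and ε > 0 satisfying the Lipschitz observer LMI: [[AᵀP + PA − CᵀYᵀ − YC + εγ_l²I, PG],[GᵀP, −εI]] ≺ 0. Then with L := P⁻¹Y, the function V(e) = eᵀPe is a Lyapunov function for the error dynamics ė = (A − LC)e + G(f(x) − f(x̂)), i.e., along trajectories with ‖f(x) − f(x̂)‖₂ ≤ γ_l‖e‖₂ one has V̇(e) < 0 for all e ≠ 0. -/

import Mathlib

/-!
Substituting `Y = P L` turns the upper-left block of the LMI into the closed-loop Lyapunov matrix
`(A - L C)ᵀ P + P (A - L C) + ε γ² I`. Evaluating the negative definite block matrix at `(e, Δ)` then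
gives `V̇ + ε (γ² ‖e‖² - ‖Δ‖²) < 0`, and the S-procedure term is nonnegative by the Lipschitz bound.
-/

open Matrix

section
variable {m n p R : Type*} [Fintype m] [Fintype n] [Fintype p] [CommRing R]

theorem sumElim_dotProduct_fromBlocks_transpose_mulVec (A : Matrix m m R) (B : Matrix m n R)
    (D : Matrix n n R) (x : m → R) (y : n → R) :
    Sum.elim x y ⬝ᵥ (fromBlocks A B Bᵀ D *ᵥ Sum.elim x y) =
      x ⬝ᵥ (A *ᵥ x) + 2 * (x ⬝ᵥ (B *ᵥ y)) + y ⬝ᵥ (D *ᵥ y) := by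
  rw [fromBlocks_mulVec, sumElim_dotProduct_sumElim]
  simp only [Sum.elim_comp_inl, Sum.elim_comp_inr, dotProduct_add, mulVec_transpose,
    dotProduct_comm y (vecMul x B), dotProduct_mulVec]
  ring

theorem transpose_sub_mul_mul_add_mul_sub_eq {A P : Matrix n n R} {L Y : Matrix n p R}
    (C : Matrix p n R) (hP : Pᵀ = P) (hPL : P * L = Y) :
    (A - L * C)ᵀ * P + P * (A - L * C) = Aᵀ * P + P * A - Cᵀ * Yᵀ - Y * C := by
  rw [← hPL, transpose_sub, transpose_mul, transpose_mul, hP, sub_mul, mul_sub,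
    Matrix.mul_assoc, Matrix.mul_assoc, ← Matrix.mul_assoc P L C]
  abel

end

theorem dotProduct_self_le_of_sqrt_sum_sq_le {m n : Type*} [Fintype m] [Fintype n]
    {x : m → ℝ} {y : n → ℝ} {γ : ℝ} (h : √(∑ i, y i ^ 2) ≤ γ * √(∑ i, x i ^ 2)) :
    y ⬝ᵥ y ≤ γ ^ 2 * (x ⬝ᵥ x) := by
  have hsq := (Real.sqrt_le_iff.mp h).2
  rw [mul_pow, Real.sq_sqrt (by positivity)] at hsq
  simpa only [dotProduct, ← sq] using hsq

theorem quadratic_add_cross_neg_of_posDef_neg_fromBlocks {m n : Type*} [Fintype m] [Fintype n]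
    [DecidableEq m] [DecidableEq n] {M : Matrix m m ℝ} {B : Matrix m n ℝ} {ε γ : ℝ}
    (hLMI : (-(fromBlocks (M + (ε * γ ^ 2) • 1) B Bᵀ (-(ε • 1)))).PosDef) (hε : 0 ≤ ε)
    {x : m → ℝ} (hx : x ≠ 0) {y : n → ℝ} (hy : y ⬝ᵥ y ≤ γ ^ 2 * (x ⬝ᵥ x)) :
    x ⬝ᵥ (M *ᵥ x) + 2 * (x ⬝ᵥ (B *ᵥ y)) < 0 := by
  have hxy : Sum.elim x y ≠ 0 := fun h => hx (by simpa using congrArg (· ∘ Sum.inl) h)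
  have hpos := hLMI.dotProduct_mulVec_pos hxy
  rw [star_trivial, neg_mulVec, dotProduct_neg, sumElim_dotProduct_fromBlocks_transpose_mulVec,
    add_mulVec, neg_mulVec, smul_mulVec, smul_mulVec, one_mulVec, one_mulVec, dotProduct_add,
    dotProduct_neg, dotProduct_smul, dotProduct_smul, smul_eq_mul, smul_eq_mul] at hpos
  nlinarith [mul_le_mul_of_nonneg_left hy hε]

theorem lmi_implies_lyapunov_decrease_general {n g p : ℕ}
    (A : Matrix (Fin n) (Fin n) ℝ) (G : Matrix (Fin n) (Fin g) ℝ)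
    (C : Matrix (Fin p) (Fin n) ℝ) (P : Matrix (Fin n) (Fin n) ℝ)
    (Y : Matrix (Fin n) (Fin p) ℝ) (ε γl : ℝ)
    (hP : P.PosDef) (hε : 0 < ε)
    (hLMI : (-(Matrix.fromBlocks
        (Aᵀ * P + P * A - Cᵀ * Yᵀ - Y * C + (ε * γl ^ 2) • (1 : Matrix (Fin n) (Fin n) ℝ))
        (P * G) (Gᵀ * P) (-(ε • (1 : Matrix (Fin g) (Fin g) ℝ))))).PosDef)
    (L : Matrix (Fin n) (Fin p) ℝ) (hL : L = P⁻¹ * Y) :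
    ∀ e : Fin n → ℝ, e ≠ 0 → ∀ Δ : Fin g → ℝ,
      Real.sqrt (∑ i, Δ i ^ 2) ≤ γl * Real.sqrt (∑ i, e i ^ 2) →
      e ⬝ᵥ (((A - L * C)ᵀ * P + P * (A - L * C)) *ᵥ e) +
        2 * (e ⬝ᵥ ((P * G) *ᵥ Δ)) < 0 := by
  intro e he Δ hΔ
  have hPsymm : Pᵀ = P := by simpa using hP.isHermitian.eq
  have hPL : P * L = Y := by
    rw [hL, ← Matrix.mul_assoc, mul_nonsing_inv P ((isUnit_iff_isUnit_det P).mp hP.isUnit),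
      Matrix.one_mul]
  rw [transpose_sub_mul_mul_add_mul_sub_eq C hPsymm hPL]
  rw [show Gᵀ * P = (P * G)ᵀ by rw [transpose_mul, hPsymm]] at hLMI
  exact quadratic_add_cross_neg_of_posDef_neg_fromBlocks hLMI hε.le he
    (dotProduct_self_le_of_sqrt_sum_sq_le hΔ)

theorem lmi_implies_lyapunov_decrease {n g p : ℕ}
    (A : Matrix (Fin n) (Fin n) ℝ) (G : Matrix (Fin n) (Fin g) ℝ)
    (C : Matrix (Fin p) (Fin n) ℝ) (P : Matrix (Fin n) (Fin n) ℝ)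
    (Y : Matrix (Fin n) (Fin p) ℝ) (ε γl : ℝ)
    (hP : P.PosDef) (hε : 0 < ε) (hγ : 0 ≤ γl)
    (hLMI : (-(Matrix.fromBlocks
        (Aᵀ * P + P * A - Cᵀ * Yᵀ - Y * C + (ε * γl ^ 2) • (1 : Matrix (Fin n) (Fin n) ℝ))
        (P * G) (Gᵀ * P) (-(ε • (1 : Matrix (Fin g) (Fin g) ℝ))))).PosDef)
    (L : Matrix (Fin n) (Fin p) ℝ) (hL : L = P⁻¹ * Y) :
    ∀ e : Fin n → ℝ, e ≠ 0 → ∀ Δ : Fin g → ℝ,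
      Real.sqrt (∑ i, Δ i ^ 2) ≤ γl * Real.sqrt (∑ i, e i ^ 2) →
      e ⬝ᵥ (((A - L * C)ᵀ * P + P * (A - L * C)) *ᵥ e) +
        2 * (e ⬝ᵥ ((P * G) *ᵥ Δ)) < 0 :=
  lmi_implies_lyapunov_decrease_general A G C P Y ε γl hP hε hLMI L hL
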